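/- Let H be a real Hilbert space. For n ≥ 0 let α_n ∈ (0,1) and let R_n : H → H be α_n-averaged, i.e., R_n = (1 − α_n) Id + α_n T_n for some nonexpansive T_n : H → H, and suppose S := ∩_{n≥0} Fix R_n ≠ ∅, liminf_{n→+∞} α_n > 0 and Σ_{n≥1} |1/α_n − 1/α_{n−1}| < +∞. Let (x_n)_{n≥0} be generated by x_{n+1} = β_n x_n + λ_n (R_n(β_n x_n) − β_n x_n) for all n ≥ 0 from a starting point x_0 ∈ H, where (i) 0 < β_n ≤ 1 for all n ≥ 0, β_n → 1, Σ_{n≥0}(1 − β_n) = +∞, and Σ_{n≥1} |β_n − β_{n−1}| < +∞; (ii) 0 < λ_n ≤ 1/α_n for all n ≥ 0, liminf_{n→+∞} λ_n > 0, and Σ_{n≥1} |λ_n − λ_{n−1}| < +∞; (iii) Σ_{n≥1} ‖R_n(β_{n−1} x_{n−1}) − R_{n−1}(β_{n−1} x_{n−1})‖ < +∞. Suppose further that for any subsequence (x_{n_k})_{k≥0} of (x_n)_{n≥0} converging weakly to some x ∈ H (i.e., ⟨x_{n_k}, z⟩ → ⟨x, z⟩ for all z ∈ H) with x_{n_k}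 − R_{n_k} x_{n_k} → 0 strongly, one has x ∈ S. If x̄ ∈ S satisfies ‖x̄‖ ≤ ‖y‖ for all y ∈ S, then (x_n)_{n≥0} converges strongly to x̄. -/

import Mathlib

/-!
The step map `G n = Id + λₙ (Rₙ - Id) = (1 - λₙ αₙ) Id + λₙ αₙ Tₙ` is nonexpansive because
`λₙ αₙ ≤ 1`, and it fixes every common fixed point, so the iterates stay bounded. Xu's lemma
(`sₙ₊₁ ≤ (1 - γₙ) sₙ + γₙ δₙ + εₙ` with `∑ γₙ = ∞`, `limsup δₙ ≤ 0`, `∑ εₙ < ∞` forces `sₙ → 0`),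
applied to `‖xₙ₊₁ - xₙ‖` with `γₙ = 1 - βₙ₊₁`, gives asymptotic regularity, hence
`xₙ - Rₙ xₙ → 0`. By weak sequential compactness and the demiclosedness hypothesis every weak
cluster point `x` is a common fixed point; as `x̄` is the minimal-norm point of the convex set of
common fixed points, `⟪x̄, x - x̄⟫ ≥ 0`, i.e. `limsup ⟪xₙ - x̄, -x̄⟫ ≤ 0`. Xu's lemma applied to
`‖xₙ - x̄‖²` with `γₙ = 1 - βₙ` then gives strong convergence.
-/

open Filter Topology Finset
open scoped RealInnerProductSpace

theorem tendsto_prod_one_sub_of_not_summable {γ : ℕ → ℝ} (hγ0 : ∀ n, 0 ≤ γ n)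
    (hγ1 : ∀ n, γ n ≤ 1) (hγ : ¬Summable γ) :
    Tendsto (fun m => ∏ k ∈ range m, (1 - γ k)) atTop (𝓝 0) := by
  have hexp : ∀ m, ∏ k ∈ range m, (1 - γ k) ≤ Real.exp (-∑ k ∈ range m, γ k) := fun m =>
    calc ∏ k ∈ range m, (1 - γ k) ≤ ∏ k ∈ range m, Real.exp (-γ k) :=
          prod_le_prod (fun k _ => sub_nonneg.2 (hγ1 k))
            (fun k _ => by linarith [Real.add_one_le_exp (-γ k)])
      _ = Real.exp (-∑ k ∈ range m, γ k) := by rw [← sum_neg_distrib, Real.exp_sum]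
  refine squeeze_zero (fun m => prod_nonneg fun k _ => sub_nonneg.2 (hγ1 k)) hexp ?_
  exact Real.tendsto_exp_atBot.comp <| tendsto_neg_atTop_atBot.comp <|
    (not_summable_iff_tendsto_nat_atTop_of_nonneg hγ0).1 hγ

theorem le_prod_mul_max_add_sum {b γ ε : ℕ → ℝ} (hγ0 : ∀ n, 0 ≤ γ n) (hγ1 : ∀ n, γ n ≤ 1)
    (hε : ∀ n, 0 ≤ ε n) (hb : ∀ n, b (n + 1) ≤ (1 - γ n) * b n + ε n) (m : ℕ) :
    b m ≤ (∏ k ∈ range m, (1 - γ k)) * max (b 0) 0 + ∑ k ∈ range m, ε k := by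
  induction m with
  | zero => simp
  | succ m ih =>
    have hS : 0 ≤ ∑ k ∈ range m, ε k := sum_nonneg fun k _ => hε k
    rw [prod_range_succ, sum_range_succ]
    nlinarith [hb m, mul_le_mul_of_nonneg_left ih (sub_nonneg.2 (hγ1 m)), hγ0 m]

/-- Xu's lemma. -/
theorem tendsto_zero_of_le_one_sub_mul_add {s γ δ ε : ℕ → ℝ} (hs : ∀ n, 0 ≤ s n)
    (hγ0 : ∀ n, 0 ≤ γ n) (hγ1 : ∀ n, γ n ≤ 1) (hγ : ¬Summable γ)
    (hδ : ∀ c > 0, ∀ᶠ n in atTop, δ n ≤ c) (hε0 : ∀ n, 0 ≤ ε n) (hε : Summable ε)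
    (hrec : ∀ n, s (n + 1) ≤ (1 - γ n) * s n + γ n * δ n + ε n) :
    Tendsto s atTop (𝓝 0) := by
  refine tendsto_order.2 ⟨fun a ha => .of_forall fun n => ha.trans_le (hs n), fun a ha => ?_⟩
  set c := a / 4 with hc
  obtain ⟨N, hN⟩ := ((hδ c (by positivity)).and
    ((tendsto_sum_nat_add ε).eventually (eventually_le_nhds (by positivity : 0 < c)))
    ).exists_forall_of_atTop
  -- past `N`, `s - c` obeys the recursion without the `δ` term
  have hbound : ∀ m, s (m + N) - c ≤ (∏ k ∈ range m, (1 - γ (k + N))) * max (s N - c) 0 + c := by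
    intro m
    have hb := le_prod_mul_max_add_sum (b := fun m => s (m + N) - c)
      (γ := fun k => γ (k + N)) (ε := fun k => ε (k + N)) (fun k => hγ0 _)
      (fun k => hγ1 _) (fun k => hε0 _) (fun m => ?_) m
    · have hsum := ((summable_nat_add_iff N).2 hε).sum_le_tsum (range m) fun k _ => hε0 _
      simp only [zero_add] at hb
      linarith [(hN N le_rfl).2]
    · have := mul_le_mul_of_nonneg_left (hN (m + N) (Nat.le_add_left N m)).1 (hγ0 (m + N))
      simp only [add_right_comm m 1 N]
      nlinarith [hrec (m + N)]
  have hγN : ¬Summable fun k => γ (k + N) := fun h => hγ ((summable_nat_add_iff N).1 h)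
  have hsmall := ((tendsto_prod_one_sub_of_not_summable (fun k => hγ0 _) (fun k => hγ1 _) hγN
    ).mul_const (max (s N - c) 0)).eventually
      (gt_mem_nhds (show 0 * max (s N - c) 0 < c by rw [zero_mul]; positivity))
  rw [← map_add_atTop_eq_nat N, eventually_map]
  filter_upwards [hsmall] with m hm
  linarith [hbound m, hc]

theorem exists_subseq_tendsto_inner {H : Type*} [NormedAddCommGroup H] [InnerProductSpace ℝ H]
    [CompleteSpace H] {v : ℕ → H} {M : ℝ} (hv : ∀ n, ‖v n‖ ≤ M) :
    ∃ φ : ℕ → ℕ, StrictMono φ ∧ ∃ x : H,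
      ∀ z : H, Tendsto (fun k => ⟪v (φ k), z⟫) atTop (𝓝 ⟪x, z⟫) := by
  -- sequential Banach–Alaoglu in the separable closed span `K` of `v`, identified with its dual by
  -- Riesz; a general `z` enters only through its orthogonal projection onto `K`
  set K := (Submodule.span ℝ (Set.range v)).topologicalClosure
  have hvK : ∀ n, v n ∈ K := fun n =>
    Submodule.le_topologicalClosure _ (Submodule.subset_span ⟨n, rfl⟩)
  have : TopologicalSpace.SeparableSpace K :=
    ((Set.countable_range v).isSeparable.span.closure).separableSpace
  have : CompleteSpace K := (Submodule.isClosed_topologicalClosure _).completeSpace_coe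
  let f : ℕ → WeakDual ℝ K := fun n =>
    StrongDual.toWeakDual (InnerProductSpace.toDual ℝ K ⟨v n, hvK n⟩)
  obtain ⟨g, -, φ, hφ, hg⟩ := WeakDual.isSeqCompact_closedBall ℝ K 0 M
    (x := f) (fun n => by simpa [f] using hv n)
  refine ⟨φ, hφ, (InnerProductSpace.toDual ℝ K).symm (WeakDual.toStrongDual g), fun z => ?_⟩
  have := ((WeakDual.eval_continuous (K.orthogonalProjectionOnto z)).tendsto g).comp hg
  convert this using 1
  · ext k; simp [f]
  · rw [← K.inner_orthogonalProjectionOnto_eq_of_mem_left, InnerProductSpace.toDual_symm_apply]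
    rfl

section Nonexpansive

variable {E : Type*} [NormedAddCommGroup E]

theorem norm_apply_sub_self_le {T : E → E} (hT : ∀ x y, ‖T x - T y‖ ≤ ‖x - y‖) {p : E}
    (hp : T p = p) (x : E) : ‖T x - x‖ ≤ 2 * ‖x - p‖ :=
  calc ‖T x - x‖ = ‖(T x - T p) + (p - x)‖ := by rw [hp]; abel_nf
    _ ≤ ‖T x - T p‖ + ‖p - x‖ := norm_add_le _ _
    _ ≤ 2 * ‖x - p‖ := by rw [norm_sub_rev p]; linarith [hT x p]

variable [NormedSpace ℝ E]

theorem convex_fixedPoints_of_nonexpansive [StrictConvexSpace ℝ E] {T : E → E}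
    (hT : ∀ x y, ‖T x - T y‖ ≤ ‖x - y‖) : Convex ℝ (Function.fixedPoints T) := by
  intro x hx y hy a b ha hb hab
  obtain rfl : a = 1 - b := by linarith
  rw [← AffineMap.lineMap_apply_module]
  set z := AffineMap.lineMap x y b
  have hxz : dist x (T z) ≤ b * dist x y := by
    calc dist x (T z) = dist (T x) (T z) := by rw [hx.eq]
      _ ≤ dist x z := by simpa only [dist_eq_norm] using hT x z
      _ = b * dist x y := by rw [dist_left_lineMap, Real.norm_of_nonneg hb]
  have hzy : dist (T z) y ≤ (1 - b) * dist x y := by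
    calc dist (T z) y = dist (T z) (T y) := by rw [hy.eq]
      _ ≤ dist z y := by simpa only [dist_eq_norm] using hT z y
      _ = (1 - b) * dist x y := by rw [dist_lineMap_right, Real.norm_of_nonneg ha]
  have := dist_triangle x (T z) y
  exact eq_lineMap_of_dist_eq_mul_of_dist_eq_mul (by linarith) (by linarith)

def relax (t : ℝ) (T : E → E) (x : E) : E := x + t • (T x - x)

theorem relax_sub_self (t : ℝ) (T : E → E) (x : E) : relax t T x - x = t • (T x - x) :=
  add_sub_cancel_left _ _

theorem relax_relax (s t : ℝ) (T : E → E) : relax s (relax t T) = relax (s * t) T := by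
  ext x
  simp only [relax, add_sub_cancel_left, mul_smul]

theorem relax_eq_self_iff {t : ℝ} (ht : t ≠ 0) {T : E → E} {x : E} :
    relax t T x = x ↔ T x = x := by
  rw [← sub_eq_zero, relax_sub_self, smul_eq_zero, sub_eq_zero, or_iff_right ht]

theorem norm_relax_sub_relax_le {T : E → E} (hT : ∀ x y, ‖T x - T y‖ ≤ ‖x - y‖) {t : ℝ}
    (ht0 : 0 ≤ t) (ht1 : t ≤ 1) (x y : E) : ‖relax t T x - relax t T y‖ ≤ ‖x - y‖ := by
  have hid : relax t T x - relax t T y = (1 - t) • (x - y) + t • (T x - T y) := by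
    simp only [relax]; module
  calc ‖relax t T x - relax t T y‖ ≤ (1 - t) * ‖x - y‖ + t * ‖T x - T y‖ := by
        rw [hid]
        refine (norm_add_le _ _).trans_eq ?_
        rw [norm_smul, norm_smul, Real.norm_of_nonneg (sub_nonneg.2 ht1), Real.norm_of_nonneg ht0]
    _ ≤ ‖x - y‖ := by nlinarith [hT x y]

theorem norm_relax_relax_sub_le {T : E → E} (hT : ∀ x y, ‖T x - T y‖ ≤ ‖x - y‖) {s t : ℝ}
    (hs : 0 ≤ s) (ht : 0 < t) (hst : s ≤ 1 / t) (x y : E) :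
    ‖relax s (relax t T) x - relax s (relax t T) y‖ ≤ ‖x - y‖ := by
  rw [relax_relax]
  exact norm_relax_sub_relax_le hT (mul_nonneg hs ht.le) ((le_div_iff₀ ht).1 hst) x y

theorem norm_relax_sub_relax_apply_le (s t : ℝ) (S T : E → E) (x : E) :
    ‖relax s S x - relax t T x‖ ≤ |s| * ‖S x - T x‖ + |s - t| * ‖T x - x‖ := by
  have hid : relax s S x - relax t T x = s • (S x - T x) + (s - t) • (T x - x) := by
    simp only [relax]; module
  rw [hid, ← Real.norm_eq_abs, ← Real.norm_eq_abs, ← norm_smul, ← norm_smul]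
  exact norm_add_le _ _

theorem norm_smul_sub_le_max {β : ℝ} (h0 : 0 ≤ β) (h1 : β ≤ 1) (x p : E) :
    ‖β • x - p‖ ≤ max ‖x - p‖ ‖p‖ :=
  calc ‖β • x - p‖ = ‖β • (x - p) + (1 - β) • (-p)‖ := by congr 1; module
    _ ≤ β * ‖x - p‖ + (1 - β) * ‖p‖ := by
        refine (norm_add_le _ _).trans_eq ?_
        rw [norm_smul, norm_smul, norm_neg, Real.norm_of_nonneg h0,
          Real.norm_of_nonneg (sub_nonneg.2 h1)]
    _ ≤ max ‖x - p‖ ‖p‖ := by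
        nlinarith [le_max_left ‖x - p‖ ‖p‖, le_max_right ‖x - p‖ ‖p‖]

end Nonexpansive

section Iteration

variable {E : Type*} [NormedAddCommGroup E] [NormedSpace ℝ E] {G : ℕ → E → E} {β : ℕ → ℝ}
  {u : ℕ → E}

theorem norm_sub_le_max_of_nonexpansive (hG : ∀ n x y, ‖G n x - G n y‖ ≤ ‖x - y‖) {p : E}
    (hp : ∀ n, G n p = p) (hβ0 : ∀ n, 0 ≤ β n) (hβ1 : ∀ n, β n ≤ 1)
    (hu : ∀ n, u (n + 1) = G n (β n • u n)) (n : ℕ) : ‖u n - p‖ ≤ max ‖u 0 - p‖ ‖p‖ := by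
  induction n with
  | zero => exact le_max_left _ _
  | succ n ih =>
    calc ‖u (n + 1) - p‖ = ‖G n (β n • u n) - G n p‖ := by rw [hu, hp]
      _ ≤ ‖β n • u n - p‖ := hG n _ _
      _ ≤ max ‖u n - p‖ ‖p‖ := norm_smul_sub_le_max (hβ0 n) (hβ1 n) _ _
      _ ≤ max ‖u 0 - p‖ ‖p‖ := max_le ih (le_max_right _ _)

theorem tendsto_norm_smul_sub_self (hβ : Tendsto β atTop (𝓝 1)) {M : ℝ} (hM : ∀ n, ‖u n‖ ≤ M) :
    Tendsto (fun n => ‖β n • u n - u n‖) atTop (𝓝 0) := by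
  have h : Tendsto (fun n => |β n - 1| * M) atTop (𝓝 0) := by
    simpa using ((hβ.sub_const 1).abs).mul_const M
  refine squeeze_zero (fun n => norm_nonneg _) (fun n => ?_) h
  calc ‖β n • u n - u n‖ = |β n - 1| * ‖u n‖ := by
        rw [← Real.norm_eq_abs, ← norm_smul, sub_smul, one_smul]
    _ ≤ |β n - 1| * M := by gcongr; exact hM n

theorem tendsto_norm_succ_sub_of_nonexpansive (hG : ∀ n x y, ‖G n x - G n y‖ ≤ ‖x - y‖)
    (hβ0 : ∀ n, 0 ≤ β n) (hβ1 : ∀ n, β n ≤ 1) (hβdiv : ¬Summable fun n => 1 - β n)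
    (hβsum : Summable fun n => |β (n + 1) - β n|) (hu : ∀ n, u (n + 1) = G n (β n • u n))
    {M : ℝ} (hM : ∀ n, ‖u n‖ ≤ M)
    (hGsum : Summable fun n => ‖G (n + 1) (β n • u n) - G n (β n • u n)‖) :
    Tendsto (fun n => ‖u (n + 1) - u n‖) atTop (𝓝 0) := by
  refine tendsto_zero_of_le_one_sub_mul_add (γ := fun n => 1 - β (n + 1)) (δ := 0)
    (ε := fun n => |β (n + 1) - β n| * M + ‖G (n + 1) (β n • u n) - G n (β n • u n)‖)
    (fun n => norm_nonneg _) (fun n => sub_nonneg.2 (hβ1 _)) (fun n => by linarith [hβ0 (n + 1)])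
    (fun h => hβdiv ((summable_nat_add_iff 1).1 h)) (fun c hc => .of_forall fun _ => hc.le)
    (fun n => add_nonneg (mul_nonneg (abs_nonneg _) ((norm_nonneg _).trans (hM 0)))
      (norm_nonneg _))
    ((hβsum.mul_right M).add hGsum) (fun n => ?_)
  have hy : ‖β (n + 1) • u (n + 1) - β n • u n‖
      ≤ β (n + 1) * ‖u (n + 1) - u n‖ + |β (n + 1) - β n| * M :=
    calc ‖β (n + 1) • u (n + 1) - β n • u n‖
        = ‖β (n + 1) • (u (n + 1) - u n) + (β (n + 1) - β n) • u n‖ := by congr 1; module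
      _ ≤ ‖β (n + 1) • (u (n + 1) - u n)‖ + ‖(β (n + 1) - β n) • u n‖ := norm_add_le _ _
      _ ≤ β (n + 1) * ‖u (n + 1) - u n‖ + |β (n + 1) - β n| * M := by
        rw [norm_smul, norm_smul, Real.norm_of_nonneg (hβ0 _), Real.norm_eq_abs]
        gcongr
        exact hM n
  calc ‖u (n + 1 + 1) - u (n + 1)‖
      = ‖(G (n + 1) (β (n + 1) • u (n + 1)) - G (n + 1) (β n • u n))
          + (G (n + 1) (β n • u n) - G n (β n • u n))‖ := by rw [hu, hu n]; abel_nf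
    _ ≤ ‖β (n + 1) • u (n + 1) - β n • u n‖ + ‖G (n + 1) (β n • u n) - G n (β n • u n)‖ :=
      (norm_add_le _ _).trans (add_le_add_left (hG _ _ _) _)
    _ ≤ _ := by simp only [Pi.zero_apply, mul_zero, add_zero, sub_sub_cancel]; linarith

theorem summable_norm_relax_succ_sub {R : ℕ → E → E} (hR : ∀ n x y, ‖R n x - R n y‖ ≤ ‖x - y‖)
    {p : E} (hp : ∀ n, R n p = p) {lam : ℕ → ℝ} {Λ : ℝ} (hlam : ∀ n, |lam n| ≤ Λ) {y : ℕ → E}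
    {C : ℝ} (hy : ∀ n, ‖y n - p‖ ≤ C) (hlamsum : Summable fun n => |lam (n + 1) - lam n|)
    (hRsum : Summable fun n => ‖R (n + 1) (y n) - R n (y n)‖) :
    Summable fun n => ‖relax (lam (n + 1)) (R (n + 1)) (y n) - relax (lam n) (R n) (y n)‖ := by
  refine Summable.of_nonneg_of_le (fun n => norm_nonneg _)
    (fun n => (norm_relax_sub_relax_apply_le _ _ _ _ _).trans ?_)
    ((hRsum.mul_left Λ).add (hlamsum.mul_right (2 * C)))
  refine add_le_add (mul_le_mul_of_nonneg_right (hlam _) (norm_nonneg _))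
    (mul_le_mul_of_nonneg_left ?_ (abs_nonneg _))
  exact (norm_apply_sub_self_le (hR n) (hp n) _).trans (by linarith [hy n])

theorem tendsto_norm_sub_apply_of_relax {R : ℕ → E → E}
    (hR : ∀ n x y, ‖R n x - R n y‖ ≤ ‖x - y‖) {lam : ℕ → ℝ}
    (hu : ∀ n, u (n + 1) = relax (lam n) (R n) (β n • u n)) {c : ℝ} (hc : 0 < c)
    (hlam : ∀ᶠ n in atTop, c ≤ lam n) (hs : Tendsto (fun n => ‖u (n + 1) - u n‖) atTop (𝓝 0))
    (hβu : Tendsto (fun n => ‖β n • u n - u n‖) atTop (𝓝 0)) :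
    Tendsto (fun n => ‖u n - R n (u n)‖) atTop (𝓝 0) := by
  refine squeeze_zero' (.of_forall fun n => norm_nonneg _) ?_
    (((hβu.const_mul 2).add ((hs.add hβu).div_const c)).trans_eq (by simp))
  filter_upwards [hlam] with n hn
  set y := β n • u n
  have hstep : c * ‖R n y - y‖ ≤ ‖u (n + 1) - u n‖ + ‖y - u n‖ :=
    calc c * ‖R n y - y‖ ≤ lam n * ‖R n y - y‖ := by gcongr
      _ = ‖u (n + 1) - y‖ := by
        rw [hu, relax_sub_self, norm_smul, Real.norm_of_nonneg (hc.le.trans hn)]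
      _ ≤ ‖u (n + 1) - u n‖ + ‖y - u n‖ := by
        simpa only [norm_sub_rev y] using norm_sub_le_norm_sub_add_norm_sub (u (n + 1)) (u n) y
  calc ‖u n - R n (u n)‖ = ‖(u n - y) + (y - R n y) + (R n y - R n (u n))‖ := by abel_nf
    _ ≤ ‖u n - y‖ + ‖y - R n y‖ + ‖R n y - R n (u n)‖ := norm_add₃_le
    _ ≤ 2 * ‖y - u n‖ + ‖R n y - y‖ := by
        rw [norm_sub_rev (u n), norm_sub_rev y (R n y)]
        linarith [hR n y (u n)]
    _ ≤ 2 * ‖y - u n‖ + (‖u (n + 1) - u n‖ + ‖y - u n‖) / c := by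
        gcongr
        exact (le_div_iff₀' hc).2 hstep

end Iteration

section Hilbert

variable {H : Type*} [NormedAddCommGroup H] [InnerProductSpace ℝ H]

theorem inner_sub_nonneg_of_isMinOn_norm {S : Set H} (hS : Convex ℝ S) {xb : H} (hxb : xb ∈ S)
    (hmin : IsMinOn (‖·‖) S xb) {x : H} (hx : x ∈ S) : 0 ≤ ⟪xb, x - xb⟫ := by
  have : Nonempty S := ⟨⟨xb, hxb⟩⟩
  have hinf : ‖0 - xb‖ = ⨅ w : S, ‖0 - (w : H)‖ := by
    simp only [zero_sub, norm_neg]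
    exact le_antisymm (le_ciInf fun w => hmin w.2)
      (ciInf_le ⟨0, Set.forall_mem_range.2 fun w => norm_nonneg _⟩ (⟨xb, hxb⟩ : S))
  have := (norm_eq_iInf_iff_real_inner_le_zero hS hxb).1 hinf x hx
  rwa [zero_sub, inner_neg_left, neg_nonpos] at this

theorem norm_smul_sub_sq_le {β : ℝ} (h0 : 0 ≤ β) (h1 : β ≤ 1) (x p : H) :
    ‖β • x - p‖ ^ 2 ≤ β * ‖x - p‖ ^ 2 + (1 - β) * (2 * ⟪β • x - p, -p⟫) := by
  have hsplit : β • x - p = β • (x - p) + (1 - β) • (-p) := by module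
  have hexp : ‖β • x - p‖ ^ 2 = β ^ 2 * ‖x - p‖ ^ 2 + (1 - β) * (2 * ⟪β • x - p, -p⟫)
      - (1 - β) ^ 2 * ‖p‖ ^ 2 := by
    simp only [hsplit, norm_add_sq_real, inner_add_left, real_inner_smul_left,
      real_inner_smul_right, inner_neg_neg, real_inner_self_eq_norm_sq, norm_smul, norm_neg,
      Real.norm_eq_abs, mul_pow, sq_abs]
    ring
  nlinarith [sq_nonneg ((1 - β) * ‖p‖), sq_nonneg ‖x - p‖, mul_le_mul_of_nonneg_right h1 h0]

theorem eventually_inner_sub_le_of_forall_weak_limit [CompleteSpace H] {u : ℕ → H} {M : ℝ}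
    (hM : ∀ n, ‖u n‖ ≤ M) {p w : H}
    (h : ∀ φ : ℕ → ℕ, StrictMono φ → ∀ x : H,
      (∀ z, Tendsto (fun k => ⟪u (φ k), z⟫) atTop (𝓝 ⟪x, z⟫)) → ⟪x - p, w⟫ ≤ 0) :
    ∀ c > 0, ∀ᶠ n in atTop, ⟪u n - p, w⟫ ≤ c := by
  intro c hc
  by_contra hfreq
  obtain ⟨ψ, hψ, hψc⟩ := extraction_of_frequently_atTop (not_eventually.1 hfreq)
  obtain ⟨φ, hφ, x, hx⟩ := exists_subseq_tendsto_inner fun k => hM (ψ k)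
  have hlim : Tendsto (fun k => ⟪u (ψ (φ k)) - p, w⟫) atTop (𝓝 ⟪x - p, w⟫) := by
    simp only [inner_sub_left]
    exact (hx w).sub_const _
  have := ge_of_tendsto hlim (.of_forall fun k => (not_le.1 (hψc (φ k))).le)
  linarith [h (ψ ∘ φ) (hψ.comp hφ) x hx]

theorem tendsto_of_forall_weak_limit [CompleteSpace H] {G : ℕ → H → H}
    (hG : ∀ n x y, ‖G n x - G n y‖ ≤ ‖x - y‖) {xb : H} (hxb : ∀ n, G n xb = xb) {β : ℕ → ℝ}
    (hβ0 : ∀ n, 0 ≤ β n) (hβ1 : ∀ n, β n ≤ 1) (hβlim : Tendsto β atTop (𝓝 1))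
    (hβdiv : ¬Summable fun n => 1 - β n) {u : ℕ → H} (hu : ∀ n, u (n + 1) = G n (β n • u n))
    {M : ℝ} (hM : ∀ n, ‖u n‖ ≤ M)
    (h : ∀ φ : ℕ → ℕ, StrictMono φ → ∀ x : H,
      (∀ z, Tendsto (fun k => ⟪u (φ k), z⟫) atTop (𝓝 ⟪x, z⟫)) → 0 ≤ ⟪xb, x - xb⟫) :
    Tendsto u atTop (𝓝 xb) := by
  have hlimsup := eventually_inner_sub_le_of_forall_weak_limit hM (p := xb) (w := -xb)
    fun φ hφ x hx => by simpa [inner_neg_right, real_inner_comm] using h φ hφ x hx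
  have hβu := tendsto_norm_smul_sub_self hβlim hM
  have hsq : Tendsto (fun n => ‖u n - xb‖ ^ 2) atTop (𝓝 0) := by
    refine tendsto_zero_of_le_one_sub_mul_add (γ := fun n => 1 - β n)
      (δ := fun n => 2 * ⟪β n • u n - xb, -xb⟫) (ε := 0) (fun n => by positivity)
      (fun n => sub_nonneg.2 (hβ1 n)) (fun n => by linarith [hβ0 n]) hβdiv ?_
      (fun _ => le_rfl) summable_zero fun n => ?_
    · intro c hc
      filter_upwards [hlimsup (c / 4) (by positivity),
        (hβu.mul_const ‖xb‖).eventually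
          (eventually_le_nhds (show 0 * ‖xb‖ < c / 4 by rw [zero_mul]; positivity))]
        with n hn hn'
      have : ⟪β n • u n - u n, -xb⟫ ≤ ‖β n • u n - u n‖ * ‖xb‖ := by
        simpa using real_inner_le_norm (β n • u n - u n) (-xb)
      have hsplit : β n • u n - xb = (β n • u n - u n) + (u n - xb) := by abel
      rw [hsplit, inner_add_left]
      linarith
    · calc ‖u (n + 1) - xb‖ ^ 2 = ‖G n (β n • u n) - G n xb‖ ^ 2 := by rw [hu, hxb]
        _ ≤ ‖β n • u n - xb‖ ^ 2 := by gcongr; exact hG n _ _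
        _ ≤ _ := (norm_smul_sub_sq_le (hβ0 n) (hβ1 n) _ _).trans_eq
          (by rw [Pi.zero_apply, sub_sub_cancel, add_zero])
  rw [tendsto_iff_norm_sub_tendsto_zero]
  simpa [Real.sqrt_sq (norm_nonneg _)] using hsq.sqrt

end Hilbert

theorem stmt_8_general {H : Type*} [NormedAddCommGroup H] [InnerProductSpace ℝ H] [CompleteSpace H]
    (α : ℕ → ℝ) (hα : ∀ n, 0 < α n ∧ α n < 1)
    (T : ℕ → H → H) (hT : ∀ n x y, ‖T n x - T n y‖ ≤ ‖x - y‖)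
    (R : ℕ → H → H) (hR : ∀ n y, R n y = (1 - α n) • y + α n • T n y)
    (hαsum : Summable (fun n => |1 / α (n + 1) - 1 / α n|))
    (β lam : ℕ → ℝ) (u : ℕ → H)
    (hrec : ∀ n, u (n + 1) = β n • u n + lam n • (R n (β n • u n) - β n • u n))
    (hβ : ∀ n, 0 < β n ∧ β n ≤ 1)
    (hβlim : Filter.Tendsto β Filter.atTop (nhds 1))
    (hβdiv : ¬ Summable (fun n => 1 - β n))
    (hβsum : Summable (fun n => |β (n + 1) - β n|))
    (hlam : ∀ n, 0 < lam n ∧ lam n ≤ 1 / α n)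
    (hlaminf : ∃ c : ℝ, 0 < c ∧ ∀ᶠ n in Filter.atTop, c ≤ lam n)
    (hlamsum : Summable (fun n => |lam (n + 1) - lam n|))
    (hRsum : Summable (fun n => ‖R (n + 1) (β n • u n) - R n (β n • u n)‖))
    (hasym : ∀ φ : ℕ → ℕ, StrictMono φ → ∀ x : H,
      (∀ z : H, Filter.Tendsto (fun k => ⟪u (φ k), z⟫) Filter.atTop (nhds ⟪x, z⟫)) →
      Filter.Tendsto (fun k => u (φ k) - R (φ k) (u (φ k))) Filter.atTop (nhds 0) →
      ∀ n, R n x = x)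
    (xb : H) (hxb : ∀ n, R n xb = xb)
    (hmin : ∀ y : H, (∀ n, R n y = y) → ‖xb‖ ≤ ‖y‖) :
    Filter.Tendsto u Filter.atTop (nhds xb) := by
  have hβ0 : ∀ n, 0 ≤ β n := fun n => (hβ n).1.le
  have hβ1 : ∀ n, β n ≤ 1 := fun n => (hβ n).2
  have hRrelax : ∀ n, R n = relax (α n) (T n) := fun n => funext fun y => by
    rw [hR, relax]; module
  have hRne : ∀ n x y, ‖R n x - R n y‖ ≤ ‖x - y‖ := fun n => by
    rw [hRrelax]; exact norm_relax_sub_relax_le (hT n) (hα n).1.le (hα n).2.le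
  set G : ℕ → H → H := fun n => relax (lam n) (R n)
  have hGne : ∀ n x y, ‖G n x - G n y‖ ≤ ‖x - y‖ := fun n => by
    simp only [G, hRrelax]
    exact norm_relax_relax_sub_le (hT n) (hlam n).1.le (hα n).1 (hlam n).2
  have hGxb : ∀ n, G n xb = xb := fun n => by
    simp only [G, relax, hxb, sub_self, smul_zero, add_zero]
  set C := max ‖u 0 - xb‖ ‖xb‖
  have huC : ∀ n, ‖u n - xb‖ ≤ C := norm_sub_le_max_of_nonexpansive hGne hGxb hβ0 hβ1 hrec
  have hM : ∀ n, ‖u n‖ ≤ C + ‖xb‖ := fun n => (norm_le_insert' _ xb).trans (by linarith [huC n])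
  obtain ⟨Λ, hΛ⟩ : BddAbove (Set.range fun n => 1 / α n) :=
    (cauchySeq_of_summable_dist (by simpa [Real.dist_eq, abs_sub_comm] using hαsum)
      ).isBounded_range.bddAbove
  have hlamΛ : ∀ n, |lam n| ≤ Λ := fun n => by
    rw [abs_of_pos (hlam n).1]; exact (hlam n).2.trans (hΛ ⟨n, rfl⟩)
  have hs := tendsto_norm_succ_sub_of_nonexpansive hGne hβ0 hβ1 hβdiv hβsum hrec hM
    (summable_norm_relax_succ_sub hRne hxb hlamΛ (fun n =>
      (norm_smul_sub_le_max (hβ0 n) (hβ1 n) _ _).trans (max_le (huC n) (le_max_right _ _)))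
      hlamsum hRsum)
  obtain ⟨c, hc, hlamc⟩ := hlaminf
  have hres := tendsto_norm_sub_apply_of_relax hRne hrec hc hlamc hs
    (tendsto_norm_smul_sub_self hβlim hM)
  have hS : Convex ℝ {x : H | ∀ n, R n x = x} := by
    convert convex_iInter fun n => convex_fixedPoints_of_nonexpansive (hT n) using 1
    ext x
    simp [hRrelax, relax_eq_self_iff (hα _).1.ne', Function.IsFixedPt]
  refine tendsto_of_forall_weak_limit hGne hGxb hβ0 hβ1 hβlim hβdiv hrec hM fun φ hφ x hx => ?_
  have hxS := hasym φ hφ x hx (tendsto_zero_iff_norm_tendsto_zero.2 (hres.comp hφ.tendsto_atTop))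
  exact inner_sub_nonneg_of_isMinOn_norm hS hxb (isMinOn_iff.2 hmin) hxS

/-- strong convergence for a family of averaged operators to the
minimum-norm common fixed point. -/
theorem stmt_8 {H : Type*} [NormedAddCommGroup H] [InnerProductSpace ℝ H] [CompleteSpace H]
    (α : ℕ → ℝ) (hα : ∀ n, 0 < α n ∧ α n < 1)
    (T : ℕ → H → H) (hT : ∀ n x y, ‖T n x - T n y‖ ≤ ‖x - y‖)
    (R : ℕ → H → H) (hR : ∀ n y, R n y = (1 - α n) • y + α n • T n y)
    (hfix : ∃ p : H, ∀ n, R n p = p)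
    (hαinf : ∃ c : ℝ, 0 < c ∧ ∀ᶠ n in Filter.atTop, c ≤ α n)
    (hαsum : Summable (fun n => |1 / α (n + 1) - 1 / α n|))
    (β lam : ℕ → ℝ) (u : ℕ → H)
    (hrec : ∀ n, u (n + 1) = β n • u n + lam n • (R n (β n • u n) - β n • u n))
    (hβ : ∀ n, 0 < β n ∧ β n ≤ 1)
    (hβlim : Filter.Tendsto β Filter.atTop (nhds 1))
    (hβdiv : ¬ Summable (fun n => 1 - β n))
    (hβsum : Summable (fun n => |β (n + 1) - β n|))
    (hlam : ∀ n, 0 < lam n ∧ lam n ≤ 1 / α n)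
    (hlaminf : ∃ c : ℝ, 0 < c ∧ ∀ᶠ n in Filter.atTop, c ≤ lam n)
    (hlamsum : Summable (fun n => |lam (n + 1) - lam n|))
    (hRsum : Summable (fun n => ‖R (n + 1) (β n • u n) - R n (β n • u n)‖))
    (hasym : ∀ φ : ℕ → ℕ, StrictMono φ → ∀ x : H,
      (∀ z : H, Filter.Tendsto (fun k => ⟪u (φ k), z⟫) Filter.atTop (nhds ⟪x, z⟫)) →
      Filter.Tendsto (fun k => u (φ k) - R (φ k) (u (φ k))) Filter.atTop (nhds 0) →
      ∀ n, R n x = x)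
    (xb : H) (hxb : ∀ n, R n xb = xb)
    (hmin : ∀ y : H, (∀ n, R n y = y) → ‖xb‖ ≤ ‖y‖) :
    Filter.Tendsto u Filter.atTop (nhds xb) :=
  stmt_8_general α hα T hT R hR hαsum β lam u hrec hβ hβlim hβdiv hβsum hlam hlaminf hlamsum hRsum
    hasym xb hxb hmin
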